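/- arXiv:math/0508082 — 3 statements merged into one kernel-verified Lean document; each statement's English description precedes it below -/
import Mathlib

section
/- Let f : ℝ² → ℝ be continuous, supported in the open unit disk, and let g(p, ρ) = ∫_{|y−p|=ρ} f(y) dσ(y) be its circular Radon transform with centers p on the unit circle. Then for every nonnegative integer k, the 2k-th moment ∫₀^∞ ρ^{2k} g(p, ρ) dρ equals ∫_{ℝ²} (|x|² − 2 x·p + 1)^k f(x) dx, which is the restriction to the unit circle |p| = 1 of a polynomial in p of degree at most k. -/
open MeasureTheory

/-- The circular Radon transform: integral of `f` over the circle of radius `ρ`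
centered at `p`, with respect to arc length. -/
noncomputable def circRadon (f : ℝ × ℝ → ℝ) (p : ℝ × ℝ) (ρ : ℝ) : ℝ :=
  ρ * ∫ θ in (0:ℝ)..(2 * Real.pi), f (p.1 + ρ * Real.cos θ, p.2 + ρ * Real.sin θ)

open Finset Real

lemma expand_pow (k : ℕ) (u v p q : ℝ) :
    (u ^ 2 + v ^ 2 - 2 * (u * p + v * q) + 1) ^ k
      = ∑ j ∈ range (k + 1), ∑ i ∈ range (j + 1),
          ((k.choose j : ℝ) * (-2) ^ j * (j.choose i) * (p ^ i * q ^ (j - i)))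
            * ((u ^ 2 + v ^ 2 + 1) ^ (k - j) * u ^ i * v ^ (j - i)) := by
  rw [show u ^ 2 + v ^ 2 - 2 * (u * p + v * q) + 1
        = (-2 * (u * p + v * q)) + (u ^ 2 + v ^ 2 + 1) by ring, add_pow]
  refine Finset.sum_congr rfl fun j _ => ?_
  rw [mul_pow, add_pow, Finset.mul_sum, Finset.sum_mul, Finset.sum_mul]
  refine Finset.sum_congr rfl fun i _ => ?_
  rw [mul_pow, mul_pow]
  ring

lemma hcs_of_supp (f : ℝ × ℝ → ℝ)
    (hsupp : Function.support f ⊆ {x : ℝ × ℝ | x.1 ^ 2 + x.2 ^ 2 < 1}) :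
    HasCompactSupport f := by
  apply HasCompactSupport.intro (isCompact_closedBall (0 : ℝ × ℝ) 1)
  intro x hx
  by_contra h
  have hx1 : x.1 ^ 2 + x.2 ^ 2 < 1 := hsupp h
  apply hx
  rw [Metric.mem_closedBall, dist_zero_right, Prod.norm_def]
  apply max_le <;> rw [Real.norm_eq_abs, abs_le] <;>
    constructor <;> nlinarith [sq_nonneg x.1, sq_nonneg x.2]

lemma moment_expand (f : ℝ × ℝ → ℝ) (hf : Continuous f)
    (hcs : HasCompactSupport f) (k : ℕ) (p : ℝ × ℝ) :
    ∫ x : ℝ × ℝ, (x.1 ^ 2 + x.2 ^ 2 - 2 * (x.1 * p.1 + x.2 * p.2) + 1) ^ k * f x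
      = ∑ j ∈ range (k + 1), ∑ i ∈ range (j + 1),
          ((k.choose j : ℝ) * (-2) ^ j * (j.choose i)
              * (∫ x : ℝ × ℝ, (x.1 ^ 2 + x.2 ^ 2 + 1) ^ (k - j) * x.1 ^ i * x.2 ^ (j - i) * f x))
            * (p.1 ^ i * p.2 ^ (j - i)) := by
  have hint : ∀ j i : ℕ, Integrable
      (fun x : ℝ × ℝ => (x.1 ^ 2 + x.2 ^ 2 + 1) ^ (k - j) * x.1 ^ i * x.2 ^ (j - i) * f x) := by
    intro j i
    apply Continuous.integrable_of_hasCompactSupport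
    · fun_prop
    · exact hcs.mul_left
  have hpt : ∀ x : ℝ × ℝ,
      (x.1 ^ 2 + x.2 ^ 2 - 2 * (x.1 * p.1 + x.2 * p.2) + 1) ^ k * f x
        = ∑ j ∈ range (k + 1), ∑ i ∈ range (j + 1),
            ((k.choose j : ℝ) * (-2) ^ j * (j.choose i) * (p.1 ^ i * p.2 ^ (j - i)))
              * ((x.1 ^ 2 + x.2 ^ 2 + 1) ^ (k - j) * x.1 ^ i * x.2 ^ (j - i) * f x) := by
    intro x
    rw [expand_pow, Finset.sum_mul]
    refine Finset.sum_congr rfl fun j _ => ?_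
    rw [Finset.sum_mul]
    exact Finset.sum_congr rfl fun i _ => by ring
  simp only [hpt]
  rw [integral_finset_sum _ (fun j _ => by
    exact integrable_finset_sum _ (fun i _ => (hint j i).const_mul _))]
  refine Finset.sum_congr rfl fun j _ => ?_
  rw [integral_finset_sum _ (fun i _ => (hint j i).const_mul _)]
  refine Finset.sum_congr rfl fun i _ => ?_
  rw [MeasureTheory.integral_const_mul]
  ring


lemma moment_eq (f : ℝ × ℝ → ℝ) (hf : Continuous f)
    (hsupp : Function.support f ⊆ {x : ℝ × ℝ | x.1 ^ 2 + x.2 ^ 2 < 1}) (k : ℕ)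
    (p : ℝ × ℝ) (hp : p.1 ^ 2 + p.2 ^ 2 = 1) :
    (∫ ρ in Set.Ioi (0:ℝ), ρ ^ (2 * k) * circRadon f p ρ)
      = ∫ x : ℝ × ℝ,
          (x.1 ^ 2 + x.2 ^ 2 - 2 * (x.1 * p.1 + x.2 * p.2) + 1) ^ k * f x := by
  set G : ℝ × ℝ → ℝ :=
    fun q => q.1 ^ (2 * k + 1) * f (p.1 + q.1 * Real.cos q.2, p.2 + q.1 * Real.sin q.2) with hG
  have hGc : Continuous G := by
    apply Continuous.mul (by fun_prop)
    exact hf.comp (by fun_prop)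
  have htarget : polarCoord.target = Set.Ioi (0:ℝ) ×ˢ Set.Ioo (-π) π := rfl
  have hvan : ∀ q : ℝ × ℝ, 2 < q.1 → G q = 0 := by
    intro q hq
    have hz : f (p.1 + q.1 * Real.cos q.2, p.2 + q.1 * Real.sin q.2) = 0 := by
      by_contra h
      have h1 := hsupp h
      simp only [Set.mem_setOf_eq] at h1
      nlinarith [Real.sin_sq_add_cos_sq q.2, sq_nonneg (p.1 + Real.cos q.2),
        sq_nonneg (p.2 + Real.sin q.2), sq_nonneg (q.1 - 1)]
    simp [hG, hz]
  have hInt : IntegrableOn G polarCoord.target := by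
    have hA : IntegrableOn G (Set.Icc (0:ℝ) 2 ×ˢ Set.Icc (-π) π) :=
      hGc.continuousOn.integrableOn_compact (isCompact_Icc.prod isCompact_Icc)
    have hmA : MeasurableSet (Set.Icc (0:ℝ) 2 ×ˢ Set.Icc (-π) π) :=
      measurableSet_Icc.prod measurableSet_Icc
    have hmT : MeasurableSet polarCoord.target := polarCoord.open_target.measurableSet
    have h2 : IntegrableOn G (polarCoord.target \ (Set.Icc (0:ℝ) 2 ×ˢ Set.Icc (-π) π)) := by
      refine (integrableOn_congr_fun (g := fun _ => (0:ℝ)) ?_ (hmT.diff hmA)).mpr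
        (integrableOn_zero)
      rintro q ⟨hqt, hqb⟩
      rw [htarget] at hqt
      obtain ⟨hq1, hq2⟩ := hqt
      have hq2' : q.2 ∈ Set.Icc (-π) π := ⟨hq2.1.le, hq2.2.le⟩
      have h1' : q.1 ∉ Set.Icc (0:ℝ) 2 := fun hh => hqb (Set.mk_mem_prod hh hq2')
      rw [Set.mem_Icc, not_and_or, not_le, not_le] at h1'
      have : 2 < q.1 := by
        rcases h1' with h | h
        · exact absurd hq1 (by simpa using h.le.not_gt ∘ id); 
        · exact h
      exact hvan q this
    have h1 : IntegrableOn G (polarCoord.target ∩ (Set.Icc (0:ℝ) 2 ×ˢ Set.Icc (-π) π)) :=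
      hA.mono_set Set.inter_subset_right
    have := h1.union h2
    rwa [Set.inter_union_diff] at this
  have hle : -π ≤ π := by linarith [Real.pi_pos]
  calc (∫ ρ in Set.Ioi (0:ℝ), ρ ^ (2 * k) * circRadon f p ρ)
      = ∫ ρ in Set.Ioi (0:ℝ), ∫ θ in Set.Ioo (-π) π, G (ρ, θ) := by
        refine setIntegral_congr_fun measurableSet_Ioi fun ρ _ => ?_
        have hper : Function.Periodic
            (fun θ => f (p.1 + ρ * Real.cos θ, p.2 + ρ * Real.sin θ)) (2 * π) := by
          intro θ; simp [Real.cos_add_two_pi, Real.sin_add_two_pi]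
        have h1 : (∫ θ in (0:ℝ)..(2*π), f (p.1 + ρ * Real.cos θ, p.2 + ρ * Real.sin θ))
            = ∫ θ in (-π)..π, f (p.1 + ρ * Real.cos θ, p.2 + ρ * Real.sin θ) := by
          have h := hper.intervalIntegral_add_eq 0 (-π)
          rw [zero_add, show -π + 2*π = π by ring] at h
          exact h
        rw [circRadon, h1, intervalIntegral.integral_of_le hle,
          MeasureTheory.integral_Ioc_eq_integral_Ioo, ← MeasureTheory.integral_const_mul,
          ← MeasureTheory.integral_const_mul]
        refine setIntegral_congr_fun measurableSet_Ioo fun θ _ => ?_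
        simp only [hG]
        ring
    _ = ∫ q in Set.Ioi (0:ℝ) ×ˢ Set.Ioo (-π) π, G q := by
        rw [← htarget] at *
        exact (setIntegral_prod G hInt).symm
    _ = ∫ q in polarCoord.target, q.1 •
          ((fun x : ℝ × ℝ => (x.1 ^ 2 + x.2 ^ 2) ^ k * f (p.1 + x.1, p.2 + x.2))
            (polarCoord.symm q)) := by
        rw [← htarget]
        refine setIntegral_congr_fun polarCoord.open_target.measurableSet fun q _ => ?_
        show G q = q.1 • _
        have hsym : polarCoord.symm q = (q.1 * Real.cos q.2, q.1 * Real.sin q.2) := rfl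
        rw [hsym]
        simp only [smul_eq_mul, hG]
        have h2 : (q.1 * Real.cos q.2) ^ 2 + (q.1 * Real.sin q.2) ^ 2 = q.1 ^ 2 := by
          have := Real.sin_sq_add_cos_sq q.2
          linear_combination q.1 ^ 2 * this
        rw [h2]
        ring
    _ = ∫ x : ℝ × ℝ, (x.1 ^ 2 + x.2 ^ 2) ^ k * f (p.1 + x.1, p.2 + x.2) :=
        integral_comp_polarCoord_symm
          (fun x : ℝ × ℝ => (x.1 ^ 2 + x.2 ^ 2) ^ k * f (p.1 + x.1, p.2 + x.2))
    _ = ∫ x : ℝ × ℝ,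
          (x.1 ^ 2 + x.2 ^ 2 - 2 * (x.1 * p.1 + x.2 * p.2) + 1) ^ k * f x := by
        have h := integral_add_left_eq_self (μ := (volume : Measure (ℝ × ℝ)))
          (fun x : ℝ × ℝ => ((x.1 - p.1) ^ 2 + (x.2 - p.2) ^ 2) ^ k * f x) p
        have h1 : ∀ x : ℝ × ℝ,
            (((p + x).1 - p.1) ^ 2 + ((p + x).2 - p.2) ^ 2) ^ k * f (p + x)
              = (x.1 ^ 2 + x.2 ^ 2) ^ k * f (p.1 + x.1, p.2 + x.2) := by
          intro x
          have : p + x = (p.1 + x.1, p.2 + x.2) := rfl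
          rw [this]
          ring_nf
        have h2 : ∀ x : ℝ × ℝ,
            ((x.1 - p.1) ^ 2 + (x.2 - p.2) ^ 2) ^ k * f x
              = (x.1 ^ 2 + x.2 ^ 2 - 2 * (x.1 * p.1 + x.2 * p.2) + 1) ^ k * f x := by
          intro x
          rw [show (x.1 - p.1) ^ 2 + (x.2 - p.2) ^ 2
            = x.1 ^ 2 + x.2 ^ 2 - 2 * (x.1 * p.1 + x.2 * p.2) + 1 from by linear_combination hp]
        simp only [h1, h2] at h
        exact h

/-- STATEMENT 4: For `f` continuous supported in the open unit disk and `p` on the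
unit circle, the `2k`-th moment `∫₀^∞ ρ^{2k} g(p,ρ) dρ` of the circular Radon
transform equals `∫ (|x|² − 2x·p + 1)^k f(x) dx`, which is the restriction to the
unit circle of a polynomial in `p` of degree at most `k`. -/theorem circ_radon_moment (f : ℝ × ℝ → ℝ) (hf : Continuous f)
    (hsupp : Function.support f ⊆ {x : ℝ × ℝ | x.1 ^ 2 + x.2 ^ 2 < 1}) (k : ℕ) :
    (∀ p : ℝ × ℝ, p.1 ^ 2 + p.2 ^ 2 = 1 →
      (∫ ρ in Set.Ioi (0:ℝ), ρ ^ (2 * k) * circRadon f p ρ)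
        = ∫ x : ℝ × ℝ,
            (x.1 ^ 2 + x.2 ^ 2 - 2 * (x.1 * p.1 + x.2 * p.2) + 1) ^ k * f x) ∧
    (∃ P : MvPolynomial (Fin 2) ℝ, P.totalDegree ≤ k ∧
      ∀ p : ℝ × ℝ, p.1 ^ 2 + p.2 ^ 2 = 1 →
        (∫ ρ in Set.Ioi (0:ℝ), ρ ^ (2 * k) * circRadon f p ρ)
          = MvPolynomial.eval ![p.1, p.2] P) := by
  refine ⟨fun p hp => moment_eq f hf hsupp k p hp, ?_⟩
  set c : ℕ → ℕ → ℝ := fun j i =>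
    (k.choose j : ℝ) * (-2) ^ j * (j.choose i)
      * (∫ x : ℝ × ℝ, (x.1 ^ 2 + x.2 ^ 2 + 1) ^ (k - j) * x.1 ^ i * x.2 ^ (j - i) * f x)
    with hc
  refine ⟨∑ j ∈ Finset.range (k + 1), ∑ i ∈ Finset.range (j + 1),
    MvPolynomial.C (c j i) * MvPolynomial.X 0 ^ i * MvPolynomial.X 1 ^ (j - i), ?_, ?_⟩
  · refine (MvPolynomial.totalDegree_finset_sum _ _).trans (Finset.sup_le fun j hj => ?_)
    refine (MvPolynomial.totalDegree_finset_sum _ _).trans (Finset.sup_le fun i hi => ?_)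
    have hik : i ≤ j := Nat.lt_succ_iff.mp (Finset.mem_range.mp hi)
    have hjk : j ≤ k := Nat.lt_succ_iff.mp (Finset.mem_range.mp hj)
    calc ((MvPolynomial.C (c j i) : MvPolynomial (Fin 2) ℝ) * MvPolynomial.X (0 : Fin 2) ^ i
            * MvPolynomial.X (1 : Fin 2) ^ (j - i)).totalDegree
        ≤ ((MvPolynomial.C (c j i) : MvPolynomial (Fin 2) ℝ) * MvPolynomial.X (0 : Fin 2) ^ i).totalDegree
            + (MvPolynomial.X (1 : Fin 2) ^ (j - i)).totalDegree :=
          MvPolynomial.totalDegree_mul _ _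
      _ ≤ (((MvPolynomial.C (c j i) : MvPolynomial (Fin 2) ℝ)).totalDegree
            + (MvPolynomial.X (0 : Fin 2) ^ i).totalDegree)
            + (MvPolynomial.X (1 : Fin 2) ^ (j - i)).totalDegree := by
          exact Nat.add_le_add_right (MvPolynomial.totalDegree_mul _ _) _
      _ ≤ k := by
          rw [MvPolynomial.totalDegree_C, MvPolynomial.totalDegree_X_pow,
            MvPolynomial.totalDegree_X_pow]
          omega
  · intro p hp
    rw [moment_eq f hf hsupp k p hp,
      moment_expand f hf (hcs_of_supp f hsupp) k p]
    simp only [map_sum, map_mul, map_pow, MvPolynomial.eval_C, MvPolynomial.eval_X,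
      Matrix.cons_val_zero, Matrix.cons_val_one, Matrix.head_cons]
    refine Finset.sum_congr rfl fun j _ => Finset.sum_congr rfl fun i _ => by
      rw [hc]; ring
end

section
/- Let f be continuous, supported in the unit disk, with Fourier expansion f(r cos φ, r sin φ) = Σ_n f_n(r) e^{inφ}, and let g = R_S f with Fourier coefficients g_n(ρ) in the angular variable of the center. Then for every integer n and every integer k with 0 ≤ k < |n|, the moment ∫₀^∞ ρ^{2k} g_n(ρ) dρ vanishes. -/
open MeasureTheory

/-- The `n`-th angular Fourier coefficient of the circular Radon transform, the
center being `p = (cos ψ, sin ψ)`. -/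
noncomputable def circRadonFourierCoeff (f : ℝ × ℝ → ℝ) (n : ℤ) (ρ : ℝ) : ℂ :=
  (1 / (2 * Real.pi)) * ∫ ψ in (0:ℝ)..(2 * Real.pi),
    (circRadon f (Real.cos ψ, Real.sin ψ) ρ : ℂ) * Complex.exp (-Complex.I * n * ψ)

open Set Real intervalIntegral Function

private lemma exp_int_moment (n : ℤ) (hn : n ≠ 0) :
    ∫ ψ in (0:ℝ)..(2*π), Complex.exp (-Complex.I * n * ψ) = 0 := by
  have hc : (-Complex.I * n : ℂ) ≠ 0 := by
    simp [Complex.I_ne_zero, hn]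
  have : ∀ ψ : ℝ, Complex.exp (-Complex.I * n * ψ) = Complex.exp ((-Complex.I * n) * ψ) := by
    intro ψ; ring_nf
  rw [integral_exp_mul_complex hc]
  have h2 : (-Complex.I * n) * (2*π : ℝ) = (-n : ℤ) * (2 * π * Complex.I) := by
    push_cast; ring
  rw [h2, Complex.exp_int_mul_two_pi_mul_I]
  simp

private lemma abc_moment (k : ℕ) : ∀ (n : ℤ), (k:ℤ) < |n| → ∀ a b c : ℂ,
    ∫ ψ in (0:ℝ)..(2*π),
      (a + b * Complex.exp (Complex.I * ψ) + c * Complex.exp (-(Complex.I * ψ)))^k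
        * Complex.exp (-Complex.I * n * ψ) = 0 := by
  induction k with
  | zero =>
    intro n hn a b c
    have hn0 : n ≠ 0 := by
      intro h; rw [h] at hn; simp at hn
    simpa using exp_int_moment n hn0
  | succ k ih =>
    intro n hn a b c
    have h1 : |n| - 1 ≤ |n - 1| := by
      have := abs_sub_abs_le_abs_sub n 1
      simpa using this
    have h2 : |n| - 1 ≤ |n + 1| := by
      have := abs_sub_abs_le_abs_sub n (-1)
      simpa [sub_neg_eq_add] using this
    set X : ℝ → ℂ := fun ψ =>
      a + b * Complex.exp (Complex.I * ψ) + c * Complex.exp (-(Complex.I * ψ)) with hX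
    have key : ∀ ψ : ℝ, (X ψ)^(k+1) * Complex.exp (-Complex.I * n * ψ)
        = a * ((X ψ)^k * Complex.exp (-Complex.I * n * ψ))
          + b * ((X ψ)^k * Complex.exp (-Complex.I * (n-1) * ψ))
          + c * ((X ψ)^k * Complex.exp (-Complex.I * (n+1) * ψ)) := by
      intro ψ
      have e1 : Complex.exp (Complex.I * ψ) * Complex.exp (-Complex.I * n * ψ)
          = Complex.exp (-Complex.I * (n-1) * ψ) := by
        rw [← Complex.exp_add]; congr 1; push_cast; ring
      have e2 : Complex.exp (-(Complex.I * ψ)) * Complex.exp (-Complex.I * n * ψ)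
          = Complex.exp (-Complex.I * (n+1) * ψ) := by
        rw [← Complex.exp_add]; congr 1; push_cast; ring
      calc (X ψ)^(k+1) * Complex.exp (-Complex.I * n * ψ)
          = a * ((X ψ)^k * Complex.exp (-Complex.I * n * ψ))
            + b * ((X ψ)^k * (Complex.exp (Complex.I * ψ) * Complex.exp (-Complex.I * n * ψ)))
            + c * ((X ψ)^k * (Complex.exp (-(Complex.I * ψ)) * Complex.exp (-Complex.I * n * ψ))) := by
            rw [pow_succ]; ring
        _ = _ := by rw [e1, e2]
    have contX : Continuous X := by fun_prop
    have contterm : ∀ m : ℤ, Continuous fun ψ : ℝ => (X ψ)^k * Complex.exp (-Complex.I * m * ψ) := by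
      intro m; fun_prop
    have int1 : ∀ m : ℤ, IntervalIntegrable
        (fun ψ : ℝ => (X ψ)^k * Complex.exp (-Complex.I * m * ψ)) volume 0 (2*π) :=
      fun m => ((contterm m)).intervalIntegrable _ _
    calc ∫ ψ in (0:ℝ)..(2*π), (X ψ)^(k+1) * Complex.exp (-Complex.I * n * ψ)
        = ∫ ψ in (0:ℝ)..(2*π),
            (a * ((X ψ)^k * Complex.exp (-Complex.I * n * ψ))
              + b * ((X ψ)^k * Complex.exp (-Complex.I * (n-1) * ψ))
              + c * ((X ψ)^k * Complex.exp (-Complex.I * (n+1) * ψ))) := by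
          apply intervalIntegral.integral_congr
          intro ψ _; exact key ψ
      _ = a * (∫ ψ in (0:ℝ)..(2*π), (X ψ)^k * Complex.exp (-Complex.I * n * ψ))
          + b * (∫ ψ in (0:ℝ)..(2*π), (X ψ)^k * Complex.exp (-Complex.I * ((n:ℂ)-1) * ψ))
          + c * (∫ ψ in (0:ℝ)..(2*π), (X ψ)^k * Complex.exp (-Complex.I * ((n:ℂ)+1) * ψ)) := by
          have i1 := (int1 n)
          have i2 := (int1 (n-1)); push_cast at i2
          have i3 := (int1 (n+1)); push_cast at i3
          rw [intervalIntegral.integral_add ((i1.const_mul a).add (i2.const_mul b))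
                (i3.const_mul c),
              intervalIntegral.integral_add (i1.const_mul a) (i2.const_mul b),
              intervalIntegral.integral_const_mul, intervalIntegral.integral_const_mul,
              intervalIntegral.integral_const_mul]
      _ = 0 := by
          have j1 := ih n (by push_cast at hn ⊢; linarith) a b c
          have j2 := ih (n-1) (by push_cast at hn ⊢; linarith) a b c; push_cast at j2
          have j3 := ih (n+1) (by push_cast at hn ⊢; linarith) a b c; push_cast at j3
          rw [j1, j2, j3]
          ring

private lemma P_moment (n : ℤ) (k : ℕ) (hk : (k:ℤ) < |n|) (y : ℝ × ℝ) :
    ∫ ψ in (0:ℝ)..(2*π),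
      (((y.1 - Real.cos ψ)^2 + (y.2 - Real.sin ψ)^2 : ℝ) : ℂ)^k
        * Complex.exp (-Complex.I * n * ψ) = 0 := by
  have h := abc_moment k n hk ((y.1:ℂ)^2 + (y.2:ℂ)^2 + 1)
      (-((y.1:ℂ) - Complex.I*(y.2:ℂ))) (-((y.1:ℂ) + Complex.I*(y.2:ℂ)))
  rw [← h]
  apply intervalIntegral.integral_congr
  intro ψ _
  dsimp only
  congr 1
  have e1 : Complex.exp (Complex.I * ψ) = Complex.cos ψ + Complex.sin ψ * Complex.I := by
    rw [mul_comm, Complex.exp_mul_I]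
  have e2 : Complex.exp (-(Complex.I * ψ)) = Complex.cos ψ - Complex.sin ψ * Complex.I := by
    rw [show -(Complex.I * (ψ:ℂ)) = ((-ψ : ℝ):ℂ) * Complex.I by push_cast; ring,
        Complex.exp_mul_I]
    push_cast
    simp [Complex.cos_neg, Complex.sin_neg]
    ring
  rw [e1, e2]
  congr 1
  push_cast
  linear_combination (Complex.cos_sq_add_sin_sq (ψ:ℂ)) - 2*(y.2:ℂ)*Complex.sin (ψ:ℂ) * Complex.I_sq

private lemma polar_step (f : ℝ × ℝ → ℝ) (hf : Continuous f)
    (hzero : ∀ x : ℝ × ℝ, 1 ≤ x.1^2 + x.2^2 → f x = 0)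
    (k : ℕ) (p : ℝ × ℝ) (hp : p.1^2 + p.2^2 = 1) :
    ∫ ρ in Ioi (0:ℝ), ρ^(2*k) * circRadon f p ρ
      = ∫ y : ℝ × ℝ, ((y.1 - p.1)^2 + (y.2 - p.2)^2)^k * f y := by
  set G : ℝ × ℝ → ℝ := fun y => ((y.1 - p.1)^2 + (y.2 - p.2)^2)^k * f y with hG
  set F : ℝ × ℝ → ℝ := fun z => (z.1^2 + z.2^2)^k * f (p.1 + z.1, p.2 + z.2) with hF
  set W : ℝ × ℝ → ℝ := fun q =>
    q.1^(2*k+1) * f (p.1 + q.1 * Real.cos q.2, p.2 + q.1 * Real.sin q.2) with hW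
  -- translation invariance
  have htrans : ∫ y, G y = ∫ z, F z := by
    rw [← integral_add_left_eq_self G p]
    congr 1; funext z
    show ((((p + z).1 - p.1)^2 + ((p + z).2 - p.2)^2)^k * f (p + z)) = _
    have hz : p + z = (p.1 + z.1, p.2 + z.2) := rfl
    rw [hz]
    simp only [hF]
    ring_nf
  -- polar coordinates
  have hpolar : ∫ z, F z = ∫ q in polarCoord.target, q.1 • F (polarCoord.symm q) :=
    (integral_comp_polarCoord_symm F).symm
  have hFW : ∀ q : ℝ × ℝ, q.1 • F (polarCoord.symm q) = W q := by
    intro q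
    have hsymm : polarCoord.symm q = (q.1 * Real.cos q.2, q.1 * Real.sin q.2) := rfl
    rw [hsymm]
    simp only [hF, hW, smul_eq_mul]
    have hsq : (q.1 * Real.cos q.2)^2 + (q.1 * Real.sin q.2)^2 = q.1^2 := by
      have h := Real.sin_sq_add_cos_sq q.2; nlinarith
    rw [hsq, ← pow_mul, mul_comm 2 k]
    ring_nf
  have htarget : polarCoord.target = Ioi (0:ℝ) ×ˢ Ioo (-π) π := rfl
  have hWcont : Continuous W := by fun_prop
  have hWzero : ∀ q : ℝ × ℝ, 2 ≤ q.1 → W q = 0 := by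
    intro q hq
    have hd : (p.1 * Real.cos q.2 + p.2 * Real.sin q.2)^2 ≤ 1 := by
      nlinarith [sq_nonneg (p.1 * Real.sin q.2 - p.2 * Real.cos q.2),
        Real.sin_sq_add_cos_sq q.2]
    have hd1 : -1 ≤ p.1 * Real.cos q.2 + p.2 * Real.sin q.2 := by
      nlinarith [sq_nonneg (p.1 * Real.cos q.2 + p.2 * Real.sin q.2 + 1)]
    have : f (p.1 + q.1 * Real.cos q.2, p.2 + q.1 * Real.sin q.2) = 0 := by
      apply hzero
      have key : (p.1 + q.1 * Real.cos q.2)^2 + (p.2 + q.1 * Real.sin q.2)^2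
          = 1 + q.1^2 + 2*q.1*(p.1 * Real.cos q.2 + p.2 * Real.sin q.2) := by
        have hcs := Real.sin_sq_add_cos_sq q.2
        linear_combination hp + q.1^2 * hcs
      simp only
      rw [key]
      nlinarith [hq, hd1]
    simp [hW, this]
  have hWint : IntegrableOn W (Ioi (0:ℝ) ×ˢ Ioo (-π) π) (volume.prod volume) := by
    have hsplit : Ioi (0:ℝ) = Ioc 0 2 ∪ Ioi 2 := (Ioc_union_Ioi_eq_Ioi (by norm_num)).symm
    rw [hsplit, union_prod]
    apply IntegrableOn.union
    · exact (hWcont.continuousOn.integrableOn_compact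
        ((isCompact_Icc (a := (0:ℝ)) (b := 2)).prod (isCompact_Icc (a := -π) (b := π)))).mono_set
        (prod_mono Ioc_subset_Icc_self Ioo_subset_Icc_self)
    · exact (integrableOn_zero).congr_fun
        (fun q hq => (hWzero q (le_of_lt hq.1)).symm)
        (measurableSet_Ioi.prod measurableSet_Ioo)
  have hiter : ∫ q in polarCoord.target, q.1 • F (polarCoord.symm q)
      = ∫ r in Ioi (0:ℝ), ∫ θ in Ioo (-π) π, W (r, θ) := by
    rw [htarget]
    have : ∫ q in Ioi (0:ℝ) ×ˢ Ioo (-π) π, q.1 • F (polarCoord.symm q)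
        = ∫ q in Ioi (0:ℝ) ×ˢ Ioo (-π) π, W q := by
      apply setIntegral_congr_fun (measurableSet_Ioi.prod measurableSet_Ioo)
      intro q _; exact hFW q
    rw [this, Measure.volume_eq_prod]
    exact setIntegral_prod W hWint
  -- compute the inner integral
  have hinner : ∀ r : ℝ, r ∈ Ioi (0:ℝ) →
      (∫ θ in Ioo (-π) π, W (r, θ)) = r^(2*k) * circRadon f p r := by
    intro r _
    have hper : Function.Periodic
        (fun θ : ℝ => f (p.1 + r * Real.cos θ, p.2 + r * Real.sin θ)) (2*π) := by
      intro θ; simp [Real.cos_add_two_pi, Real.sin_add_two_pi]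
    have hshift := hper.intervalIntegral_add_eq (-π) 0
    rw [show -π + 2*π = π by ring, zero_add] at hshift
    calc (∫ θ in Ioo (-π) π, W (r, θ))
        = ∫ θ in Ioo (-π) π,
            r^(2*k+1) * f (p.1 + r * Real.cos θ, p.2 + r * Real.sin θ) := rfl
      _ = r^(2*k+1) * ∫ θ in Ioo (-π) π, f (p.1 + r * Real.cos θ, p.2 + r * Real.sin θ) :=
          MeasureTheory.integral_const_mul _ _
      _ = r^(2*k+1) * ∫ θ in (-π)..π, f (p.1 + r * Real.cos θ, p.2 + r * Real.sin θ) := by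
          rw [intervalIntegral.integral_of_le (by linarith [pi_pos] : -π ≤ π),
            integral_Ioc_eq_integral_Ioo]
      _ = r^(2*k+1) * ∫ θ in (0:ℝ)..(2*π), f (p.1 + r * Real.cos θ, p.2 + r * Real.sin θ) := by
          rw [hshift]
      _ = r^(2*k) * circRadon f p r := by
          rw [circRadon]; ring
  calc ∫ ρ in Ioi (0:ℝ), ρ^(2*k) * circRadon f p ρ
      = ∫ r in Ioi (0:ℝ), ∫ θ in Ioo (-π) π, W (r, θ) :=
        (setIntegral_congr_fun measurableSet_Ioi hinner).symm
    _ = ∫ z, F z := by rw [← hiter, ← hpolar]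
    _ = ∫ y, G y := htrans.symm

private lemma integral_complex_ofReal' {α : Type*} [MeasurableSpace α] {μ : Measure α} {g : α → ℝ} :
    ∫ x, ((g x : ℝ) : ℂ) ∂μ = ((∫ x, g x ∂μ : ℝ) : ℂ) :=
  integral_ofReal

/-- For `f` continuous supported in the open unit disk, the moments
`∫₀^∞ ρ^{2k} g_n(ρ) dρ` of the angular Fourier coefficients of `g = R_S f`
vanish for all integers `k` with `0 ≤ k < |n|`. -/
theorem circ_radon_fourier_moment_vanish (f : ℝ × ℝ → ℝ) (hf : Continuous f)
    (hsupp : Function.support f ⊆ {x : ℝ × ℝ | x.1 ^ 2 + x.2 ^ 2 < 1})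
    (n : ℤ) (k : ℕ) (hk : (k : ℤ) < |n|) :
    (∫ ρ in Set.Ioi (0:ℝ), ((ρ : ℂ) ^ (2 * k)) * circRadonFourierCoeff f n ρ) = 0 := by
  have h2π : (0:ℝ) ≤ 2*π := by positivity
  have hzero : ∀ x : ℝ × ℝ, 1 ≤ x.1^2 + x.2^2 → f x = 0 := by
    intro x hx
    by_contra h
    have := hsupp (Function.mem_support.2 h)
    simp only [mem_setOf_eq] at this
    linarith
  set e : ℝ → ℂ := fun ψ => Complex.exp (-Complex.I * n * ψ) with he
  set H : ℝ → ℝ → ℂ := fun ρ ψ =>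
    ((ρ^(2*k) * circRadon f (Real.cos ψ, Real.sin ψ) ρ : ℝ) : ℂ) * e ψ with hH
  -- continuity of the Radon transform
  have hA : Continuous (fun q : (ℝ × ℝ) × ℝ => circRadon f q.1 q.2) := by
    unfold circRadon
    exact continuous_snd.mul
      (intervalIntegral.continuous_parametric_intervalIntegral_of_continuous'
        (f := fun (q : (ℝ × ℝ) × ℝ) (θ : ℝ) =>
          f (q.1.1 + q.2 * Real.cos θ, q.1.2 + q.2 * Real.sin θ))
        (by fun_prop) 0 (2*π))
  have hB : Continuous (fun q : ℝ × ℝ => circRadon f (Real.cos q.2, Real.sin q.2) q.1) :=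
    hA.comp (by fun_prop : Continuous fun q : ℝ × ℝ => (((Real.cos q.2, Real.sin q.2) : ℝ × ℝ), q.1))
  have hHcont : Continuous (uncurry H) := by
    have c1 : Continuous fun q : ℝ × ℝ =>
        (q.1 ^ (2*k) * circRadon f (Real.cos q.2, Real.sin q.2) q.1 : ℝ) :=
      (((continuous_pow (2*k)).comp continuous_fst).mul hB)
    have c2 : Continuous fun q : ℝ × ℝ => e q.2 := by fun_prop
    exact (Complex.continuous_ofReal.comp c1).mul c2
  -- vanishing for ρ ≥ 2
  have hcz : ∀ ψ ρ : ℝ, 2 ≤ ρ → circRadon f (Real.cos ψ, Real.sin ψ) ρ = 0 := by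
    intro ψ ρ hρ
    rw [circRadon]
    have hz : ∫ θ in (0:ℝ)..(2*π),
        f (Real.cos ψ + ρ * Real.cos θ, Real.sin ψ + ρ * Real.sin θ) = 0 := by
      rw [intervalIntegral.integral_congr (g := fun _ => (0:ℝ)) ?_, intervalIntegral.integral_const]
      · simp
      · intro θ _
        apply hzero
        have hd : (Real.cos ψ * Real.cos θ + Real.sin ψ * Real.sin θ)^2 ≤ 1 := by
          nlinarith [sq_nonneg (Real.cos ψ * Real.sin θ - Real.sin ψ * Real.cos θ),
            Real.sin_sq_add_cos_sq ψ, Real.sin_sq_add_cos_sq θ]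
        have hd1 : -1 ≤ Real.cos ψ * Real.cos θ + Real.sin ψ * Real.sin θ := by
          nlinarith [sq_nonneg (Real.cos ψ * Real.cos θ + Real.sin ψ * Real.sin θ + 1)]
        have key : (Real.cos ψ + ρ * Real.cos θ)^2 + (Real.sin ψ + ρ * Real.sin θ)^2
            = 1 + ρ^2 + 2*ρ*(Real.cos ψ * Real.cos θ + Real.sin ψ * Real.sin θ) := by
          have h1 := Real.sin_sq_add_cos_sq ψ
          have h2 := Real.sin_sq_add_cos_sq θ
          linear_combination h1 + ρ^2 * h2
        simp only
        rw [key]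
        nlinarith [hρ, hd1]
    simp [hz]
  have hHzero : ∀ q : ℝ × ℝ, 2 ≤ q.1 → uncurry H q = 0 := by
    intro q hq
    show H q.1 q.2 = 0
    simp [hH, hcz q.2 q.1 hq]
  -- Fubini no. 1
  have hHint : Integrable (uncurry H)
      ((volume.restrict (Ioi (0:ℝ))).prod (volume.restrict (Ioc (0:ℝ) (2*π)))) := by
    rw [Measure.prod_restrict]
    have hsplit : Ioi (0:ℝ) = Ioc 0 2 ∪ Ioi 2 := (Ioc_union_Ioi_eq_Ioi (by norm_num)).symm
    rw [hsplit, union_prod]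
    apply IntegrableOn.union
    · exact (hHcont.continuousOn.integrableOn_compact
        ((isCompact_Icc (a := (0:ℝ)) (b := 2)).prod
          (isCompact_Icc (a := (0:ℝ)) (b := 2*π)))).mono_set
        (prod_mono Ioc_subset_Icc_self Ioc_subset_Icc_self)
    · exact (integrableOn_zero).congr_fun
        (fun q hq => (hHzero q (le_of_lt hq.1)).symm)
        (measurableSet_Ioi.prod measurableSet_Ioc)
  have hfub1 : ∫ ρ in Ioi (0:ℝ), ∫ ψ in Ioc (0:ℝ) (2*π), H ρ ψ
      = ∫ ψ in Ioc (0:ℝ) (2*π), ∫ ρ in Ioi (0:ℝ), H ρ ψ :=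
    MeasureTheory.integral_integral_swap hHint
  -- inner integral over ρ via polar coordinates
  set M : ℝ → ℝ := fun ψ =>
    ∫ y : ℝ × ℝ, ((y.1 - Real.cos ψ)^2 + (y.2 - Real.sin ψ)^2)^k * f y with hM
  have hinner1 : ∀ ψ : ℝ, (∫ ρ in Ioi (0:ℝ), H ρ ψ) = ((M ψ : ℝ) : ℂ) * e ψ := by
    intro ψ
    calc ∫ ρ in Ioi (0:ℝ), H ρ ψ
        = (∫ ρ in Ioi (0:ℝ),
            ((ρ^(2*k) * circRadon f (Real.cos ψ, Real.sin ψ) ρ : ℝ) : ℂ)) * e ψ :=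
          MeasureTheory.integral_mul_const _ _
      _ = ((∫ ρ in Ioi (0:ℝ),
            (ρ^(2*k) * circRadon f (Real.cos ψ, Real.sin ψ) ρ : ℝ) : ℝ) : ℂ) * e ψ := by
          congr 1
          exact integral_complex_ofReal'
      _ = ((M ψ : ℝ) : ℂ) * e ψ := by
          rw [polar_step f hf hzero k (Real.cos ψ, Real.sin ψ)
            (by simpa using Real.cos_sq_add_sin_sq ψ)]
  -- Fubini no. 2
  set K : ℝ → (ℝ × ℝ) → ℂ := fun ψ y =>
    ((((y.1 - Real.cos ψ)^2 + (y.2 - Real.sin ψ)^2)^k * f y : ℝ) : ℂ) * e ψ with hK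
  have hMK : ∀ ψ : ℝ, ((M ψ : ℝ) : ℂ) * e ψ = ∫ y : ℝ × ℝ, K ψ y := by
    intro ψ
    have hMs : M ψ = ∫ y : ℝ × ℝ, ((y.1 - Real.cos ψ)^2 + (y.2 - Real.sin ψ)^2)^k * f y := rfl
    rw [hMs]
    rw [← integral_complex_ofReal' (μ := (volume : Measure (ℝ × ℝ))) (g := fun y : ℝ × ℝ =>
      ((y.1 - Real.cos ψ)^2 + (y.2 - Real.sin ψ)^2)^k * f y)]
    rw [← MeasureTheory.integral_mul_const]
  set D : Set (ℝ × ℝ) := {y : ℝ × ℝ | y.1^2 + y.2^2 ≤ 1} with hD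
  have hDclosed : IsClosed D :=
    isClosed_le (by fun_prop) continuous_const
  have hDcomp : IsCompact D := by
    apply Metric.isCompact_of_isClosed_isBounded hDclosed
    apply (Metric.isBounded_closedBall (x := ((0,0) : ℝ × ℝ)) (r := 1)).subset
    intro y hy
    simp only [hD, mem_setOf_eq] at hy
    have h1 : |y.1| ≤ 1 := by
      rw [← sq_le_one_iff_abs_le_one]; nlinarith [sq_nonneg y.2]
    have h2 : |y.2| ≤ 1 := by
      rw [← sq_le_one_iff_abs_le_one]; nlinarith [sq_nonneg y.1]
    rw [Metric.mem_closedBall, Prod.dist_eq]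
    simp only [Real.dist_eq, sub_zero]
    exact max_le h1 h2
  have hKcont : Continuous (uncurry K) := by
    have c1 : Continuous fun q : ℝ × (ℝ × ℝ) =>
        (((q.2.1 - Real.cos q.1)^2 + (q.2.2 - Real.sin q.1)^2)^k * f q.2 : ℝ) := by fun_prop
    have c2 : Continuous fun q : ℝ × (ℝ × ℝ) => e q.1 := by fun_prop
    exact (Complex.continuous_ofReal.comp c1).mul c2
  have hKint : Integrable (uncurry K)
      ((volume.restrict (Ioc (0:ℝ) (2*π))).prod (volume : Measure (ℝ × ℝ))) := by
    rw [Measure.restrict_prod_eq_prod_univ]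
    have hsplit : (univ : Set (ℝ × ℝ)) = D ∪ Dᶜ := (union_compl_self D).symm
    rw [hsplit, prod_union]
    apply IntegrableOn.union
    · exact (hKcont.continuousOn.integrableOn_compact
        ((isCompact_Icc (a := (0:ℝ)) (b := 2*π)).prod hDcomp)).mono_set
        (prod_mono Ioc_subset_Icc_self Subset.rfl)
    · refine (integrableOn_zero).congr_fun (fun q hq => ?_)
        (measurableSet_Ioc.prod hDclosed.measurableSet.compl)
      have hfq : f q.2 = 0 := by
        apply hzero
        have := hq.2
        simp only [hD, mem_compl_iff, mem_setOf_eq, not_le] at this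
        linarith
      show (0:ℂ) = K q.1 q.2
      simp [hK, hfq]
  have hfub2 : ∫ ψ in Ioc (0:ℝ) (2*π), ∫ y : ℝ × ℝ, K ψ y
      = ∫ y : ℝ × ℝ, ∫ ψ in Ioc (0:ℝ) (2*π), K ψ y :=
    MeasureTheory.integral_integral_swap hKint
  have hinner3 : ∀ y : ℝ × ℝ, (∫ ψ in Ioc (0:ℝ) (2*π), K ψ y) = 0 := by
    intro y
    have h1 : ∀ ψ : ℝ, K ψ y
        = (f y : ℂ) * ((((y.1 - Real.cos ψ)^2 + (y.2 - Real.sin ψ)^2 : ℝ) : ℂ)^k * e ψ) := by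
      intro ψ; simp only [hK]; push_cast; ring
    calc (∫ ψ in Ioc (0:ℝ) (2*π), K ψ y)
        = ∫ ψ in Ioc (0:ℝ) (2*π),
            (f y : ℂ) * ((((y.1 - Real.cos ψ)^2 + (y.2 - Real.sin ψ)^2 : ℝ) : ℂ)^k * e ψ) := by
          simp only [h1]
      _ = (f y : ℂ) * ∫ ψ in Ioc (0:ℝ) (2*π),
            (((y.1 - Real.cos ψ)^2 + (y.2 - Real.sin ψ)^2 : ℝ) : ℂ)^k * e ψ :=
          MeasureTheory.integral_const_mul _ _
      _ = (f y : ℂ) * ∫ ψ in (0:ℝ)..(2*π),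
            (((y.1 - Real.cos ψ)^2 + (y.2 - Real.sin ψ)^2 : ℝ) : ℂ)^k * e ψ := by
          rw [intervalIntegral.integral_of_le h2π]
      _ = 0 := by rw [he]; rw [P_moment n k hk y]; rw [mul_zero]
  -- putting everything together
  have hmain : ∫ ρ in Ioi (0:ℝ), ∫ ψ in Ioc (0:ℝ) (2*π), H ρ ψ = 0 := by
    rw [hfub1]
    calc ∫ ψ in Ioc (0:ℝ) (2*π), ∫ ρ in Ioi (0:ℝ), H ρ ψ
        = ∫ ψ in Ioc (0:ℝ) (2*π), ∫ y : ℝ × ℝ, K ψ y := by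
          apply setIntegral_congr_fun measurableSet_Ioc
          intro ψ _
          show (∫ ρ in Ioi (0:ℝ), H ρ ψ) = ∫ y : ℝ × ℝ, K ψ y
          rw [hinner1 ψ, hMK ψ]
      _ = ∫ y : ℝ × ℝ, ∫ ψ in Ioc (0:ℝ) (2*π), K ψ y := hfub2
      _ = 0 := by
          rw [MeasureTheory.integral_congr_ae (Filter.Eventually.of_forall hinner3)]
          simp
  have step1 : ∀ ρ : ℝ, (ρ:ℂ)^(2*k) * circRadonFourierCoeff f n ρ
      = (1/(2*(π:ℝ)) : ℝ) * ∫ ψ in (0:ℝ)..(2*π), H ρ ψ := by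
    intro ρ
    rw [circRadonFourierCoeff]
    rw [show ((1:ℂ)/(2*(π:ℂ))) = (((1/(2*(π:ℝ)) : ℝ)) : ℂ) by push_cast; ring]
    rw [mul_left_comm]
    congr 1
    rw [← intervalIntegral.integral_const_mul]
    apply intervalIntegral.integral_congr
    intro ψ _
    simp only [hH, he]
    push_cast
    ring
  calc ∫ ρ in Ioi (0:ℝ), (ρ:ℂ)^(2*k) * circRadonFourierCoeff f n ρ
      = ∫ ρ in Ioi (0:ℝ), ((1/(2*(π:ℝ)) : ℝ) : ℂ) * ∫ ψ in (0:ℝ)..(2*π), H ρ ψ :=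
        setIntegral_congr_fun measurableSet_Ioi (fun ρ _ => step1 ρ)
    _ = ((1/(2*(π:ℝ)) : ℝ) : ℂ) * ∫ ρ in Ioi (0:ℝ), ∫ ψ in (0:ℝ)..(2*π), H ρ ψ :=
        MeasureTheory.integral_const_mul _ _
    _ = 0 := by
        have : ∀ ρ : ℝ, (∫ ψ in (0:ℝ)..(2*π), H ρ ψ) = ∫ ψ in Ioc (0:ℝ) (2*π), H ρ ψ :=
          fun ρ => intervalIntegral.integral_of_le h2π
        rw [MeasureTheory.integral_congr_ae (Filter.Eventually.of_forall
          (fun ρ => this ρ))]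
        rw [hmain, mul_zero]
end

section
/- Let F be an entire function, let {S_k} be a family of pairwise disjoint closed disks of radius π/6 centered at points π(k + c) on the real axis (c fixed, k ∈ ℤ), and suppose |F(σ)| ≤ M(σ) := C(1+|σ|)^{−N} e^{τ|Im σ|} for all σ outside the union of the disks, with τ > 0. Then |F(σ)| ≤ C' (1+|σ|)^{−N} e^{τ|Im σ|} for all σ ∈ ℂ, with a possibly larger constant C'. -/
/-- let `F` be entire and suppose
`|F(σ)| ≤ C (1+|σ|)^{−N} e^{τ|Im σ|}` holds for all `σ` outside the union of the
pairwise disjoint closed disks of radius `π/6` centered at the real points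
`π(k+c)`, `k ∈ ℤ`.  Then the same bound, with a possibly larger constant `C'`,
holds for all `σ ∈ ℂ`. -/
theorem max_principle_disk_bound (F : ℂ → ℂ) (hF : Differentiable ℂ F)
    (C τ : ℝ) (N : ℕ) (c : ℝ) (hC : 0 < C) (hτ : 0 < τ)
    (hdisj : ∀ k l : ℤ, k ≠ l →
      Disjoint (Metric.closedBall ((Real.pi * ((k : ℝ) + c) : ℝ) : ℂ) (Real.pi / 6))
        (Metric.closedBall ((Real.pi * ((l : ℝ) + c) : ℝ) : ℂ) (Real.pi / 6)))
    (hbound : ∀ σ : ℂ,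
      (∀ k : ℤ, σ ∉ Metric.closedBall ((Real.pi * ((k : ℝ) + c) : ℝ) : ℂ) (Real.pi / 6)) →
      ‖F σ‖ ≤ C * ((1 + ‖σ‖) ^ N)⁻¹ * Real.exp (τ * |σ.im|)) :
    ∃ C' : ℝ, 0 < C' ∧ ∀ σ : ℂ,
      ‖F σ‖ ≤ C' * ((1 + ‖σ‖) ^ N)⁻¹ * Real.exp (τ * |σ.im|) := by
  have hπ : (0:ℝ) < Real.pi := Real.pi_pos
  set A : ℝ := (1 + 2 * Real.pi / 3) ^ N * Real.exp (τ * (Real.pi / 3)) with hA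
  have hA1 : 1 ≤ A := by
    have h1 : (1:ℝ) ≤ (1 + 2 * Real.pi / 3) ^ N :=
      one_le_pow₀ (by nlinarith)
    have h2 : (1:ℝ) ≤ Real.exp (τ * (Real.pi / 3)) :=
      Real.one_le_exp (by positivity)
    nlinarith
  refine ⟨C * A, by positivity, fun σ => ?_⟩
  by_cases hout : ∀ k : ℤ,
      σ ∉ Metric.closedBall ((Real.pi * ((k : ℝ) + c) : ℝ) : ℂ) (Real.pi / 6)
  · refine (hbound σ hout).trans ?_
    gcongr
    nlinarith
  · push_neg at hout
    obtain ⟨k, hk⟩ := hout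
    set z : ℂ := ((Real.pi * ((k : ℝ) + c) : ℝ) : ℂ) with hz
    have hσz : dist σ z ≤ Real.pi / 6 := Metric.mem_closedBall.mp hk
    -- bound on the sphere of radius π/3 around z
    have hfront : ∀ ζ ∈ frontier (Metric.ball z (Real.pi / 3)),
        ‖F ζ‖ ≤ C * A * ((1 + ‖σ‖) ^ N)⁻¹ := by
      intro ζ hζ
      rw [frontier_ball z (by positivity : Real.pi / 3 ≠ 0)] at hζ
      have hζz : dist ζ z = Real.pi / 3 := Metric.mem_sphere.mp hζ
      -- ζ is outside every small disk
      have hζout : ∀ l : ℤ,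
          ζ ∉ Metric.closedBall ((Real.pi * ((l : ℝ) + c) : ℝ) : ℂ) (Real.pi / 6) := by
        intro l hl
        rw [Metric.mem_closedBall] at hl
        by_cases hlk : l = k
        · subst hlk; rw [← hz] at hl; linarith [hζz ▸ hl]
        · have hzl : dist z ((Real.pi * ((l : ℝ) + c) : ℝ) : ℂ) = Real.pi * |(k:ℝ) - l| := by
            rw [hz, dist_eq_norm, ← Complex.ofReal_sub, Complex.norm_real,
              Real.norm_eq_abs]
            rw [show Real.pi * ((k:ℝ) + c) - Real.pi * ((l:ℝ) + c)
                = Real.pi * ((k:ℝ) - l) by ring, abs_mul, abs_of_pos hπ]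
          have h1 : (1:ℝ) ≤ |(k:ℝ) - l| := by
            have : (k:ℝ) - l ≠ 0 := sub_ne_zero.mpr (by exact_mod_cast Ne.symm hlk)
            have := Int.one_le_abs (sub_ne_zero.mpr (Ne.symm hlk))
            calc (1:ℝ) ≤ |((k - l : ℤ) : ℝ)| := by exact_mod_cast this
              _ = |(k:ℝ) - l| := by push_cast; ring_nf
          have htri := dist_triangle z ζ ((Real.pi * ((l : ℝ) + c) : ℝ) : ℂ)
          rw [dist_comm z ζ] at htri
          have : Real.pi ≤ Real.pi * |(k:ℝ) - l| := by nlinarith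
          nlinarith [hzl ▸ this]
      have hζb := hbound ζ hζout
      refine hζb.trans ?_
      -- compare weights
      have him : |ζ.im| ≤ Real.pi / 3 := by
        have : |ζ.im - z.im| ≤ dist ζ z := by
          simpa [dist_eq_norm] using Complex.abs_im_le_norm (ζ - z)
        rw [hζz] at this
        have hzi : z.im = 0 := by simp [hz]
        simpa [hzi] using this
      have hnorm : 1 + ‖σ‖ ≤ (1 + 2 * Real.pi / 3) * (1 + ‖ζ‖) := by
        have h1 : ‖σ‖ ≤ ‖ζ‖ + 2 * Real.pi / 3 := by
          have := dist_triangle σ z ζ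
          have h2 : dist σ ζ ≤ Real.pi / 2 := by
            rw [dist_comm z ζ] at this; linarith [hζz ▸ this]
          have := norm_sub_norm_le σ ζ
          rw [← dist_eq_norm] at this
          linarith
        have hζ0 : (0:ℝ) ≤ ‖ζ‖ := norm_nonneg _
        nlinarith
      have hpows : ((1 + ‖ζ‖) ^ N)⁻¹ ≤ (1 + 2 * Real.pi / 3) ^ N * ((1 + ‖σ‖) ^ N)⁻¹ := by
        have hp1 : (0:ℝ) < (1 + ‖ζ‖) ^ N := by positivity
        have hp2 : (0:ℝ) < (1 + ‖σ‖) ^ N := by positivity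
        rw [← div_eq_mul_inv, le_div_iff₀ hp2, inv_mul_eq_div, div_le_iff₀ hp1, ← mul_pow]
        exact pow_le_pow_left₀ (by positivity) hnorm N
      have hexp : Real.exp (τ * |ζ.im|) ≤ Real.exp (τ * (Real.pi / 3)) :=
        Real.exp_le_exp.mpr (by nlinarith [abs_nonneg ζ.im])
      calc C * ((1 + ‖ζ‖) ^ N)⁻¹ * Real.exp (τ * |ζ.im|)
          ≤ C * ((1 + 2 * Real.pi / 3) ^ N * ((1 + ‖σ‖) ^ N)⁻¹) *
              Real.exp (τ * (Real.pi / 3)) := by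
            gcongr
        _ = C * A * ((1 + ‖σ‖) ^ N)⁻¹ := by rw [hA]; ring
    have hclos : σ ∈ closure (Metric.ball z (Real.pi / 3)) := by
      rw [closure_ball z (by positivity : Real.pi / 3 ≠ 0)]
      exact Metric.mem_closedBall.mpr (by linarith)
    have hmax := Complex.norm_le_of_forall_mem_frontier_norm_le
      Metric.isBounded_ball (hF.diffContOnCl) hfront hclos
    calc ‖F σ‖ ≤ C * A * ((1 + ‖σ‖) ^ N)⁻¹ := hmax
      _ ≤ C * A * ((1 + ‖σ‖) ^ N)⁻¹ * Real.exp (τ * |σ.im|) := by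
          nlinarith [Real.one_le_exp (by positivity : (0:ℝ) ≤ τ * |σ.im|),
            mul_pos (mul_pos hC (lt_of_lt_of_le one_pos hA1))
              (inv_pos.mpr (show (0:ℝ) < (1 + ‖σ‖) ^ N by positivity))]
end
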